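/- arXiv:2209.08366 — 2 statements merged into one kernel-verified Lean document; each statement's English description precedes it below -/
import Mathlib

section
/- Let k be a field of characteristic different from 2, n ≥ 1, and let M, N ∈ Mₙ(k) with M invertible and 1 − N invertible. Then the characteristic polynomial of 2M − 1 equals the characteristic polynomial of (1 − N)⁻¹(1 + N) if and only if the characteristic polynomial of −(1 − M)M⁻¹ equals the characteristic polynomial of N. -/
open Polynomial Matrix Finset

section Aux

variable {k : Type*} [Field k] {n : ℕ}

/-- Evaluation of the characteristic polynomial. -/
lemma aux_charpoly_eval {R : Type*} [CommRing R] {m : Type*} [DecidableEq m] [Fintype m]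
    (M : Matrix m m R) (t : R) : M.charpoly.eval t = (t • (1 : Matrix m m R) - M).det := by
  rw [Matrix.charpoly, ← Polynomial.coe_evalRingHom, RingHom.map_det]
  congr 1
  ext i j
  by_cases h : i = j <;>
    simp [h, Matrix.map_apply, Matrix.sub_apply, Matrix.smul_apply, Matrix.one_apply,
      smul_eq_mul]

set_option synthInstance.maxHeartbeats 1000000 in
set_option maxHeartbeats 1000000 in
/-- Homogenized characteristic polynomial identity. -/
lemma aux_det_homog (N : Matrix (Fin n) (Fin n) k) (a b : k[X]) (hb : b ≠ 0) :
    (a • (1 : Matrix (Fin n) (Fin n) k[X]) - b • N.map C).det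
      = ∑ i ∈ Finset.range (n + 1), C (N.charpoly.coeff i) * a ^ i * b ^ (n - i) := by
  set φ := algebraMap k[X] (RatFunc k) with hφdef
  have hφ : Function.Injective φ := IsFractionRing.injective _ _
  apply hφ
  have hbne : φ b ≠ 0 := fun h => hb (hφ (by simpa using h))
  set ψ : k →+* RatFunc k := φ.comp (C : k →+* k[X]) with hψdef
  have hmap : ((a • (1 : Matrix (Fin n) (Fin n) k[X]) - b • N.map C).map φ)
      = φ b • ((φ a / φ b) • (1 : Matrix (Fin n) (Fin n) (RatFunc k)) - N.map ψ) := by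
    ext i j
    by_cases h : i = j <;>
      simp [h, Matrix.map_apply, Matrix.sub_apply, Matrix.smul_apply, Matrix.one_apply,
        smul_eq_mul, hψdef, RingHom.comp_apply, map_sub, _root_.map_mul, mul_sub]
    field_simp
  have hnd : N.charpoly.natDegree < n + 1 := by
    rw [Matrix.charpoly_natDegree_eq_dim N, Fintype.card_fin]
    omega
  rw [RingHom.map_det, RingHom.mapMatrix_apply, hmap, Matrix.det_smul, Fintype.card_fin,
    ← aux_charpoly_eval (N.map ψ) (φ a / φ b), Matrix.charpoly_map,
    Polynomial.eval_map, eval₂_eq_sum_range' ψ hnd (φ a / φ b), Finset.mul_sum,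
    map_sum]
  refine Finset.sum_congr rfl fun i hi => ?_
  have hi' : i ≤ n := by simp at hi; omega
  have hpow : (φ b) ^ (n - i) * (φ b) ^ i = (φ b) ^ n := pow_sub_mul_pow _ hi'
  rw [_root_.map_mul, _root_.map_mul, map_pow, map_pow, div_pow, ← hpow]
  have : φ (C (N.charpoly.coeff i)) = ψ (N.charpoly.coeff i) := rfl
  rw [this]
  field_simp

lemma aux_charmatrix_eq (A : Matrix (Fin n) (Fin n) k) :
    charmatrix A = (X : k[X]) • (1 : Matrix (Fin n) (Fin n) k[X]) - A.map C := by
  ext i j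
  by_cases h : i = j <;>
    simp [h, Matrix.smul_apply, Matrix.one_apply, Matrix.sub_apply, Matrix.map_apply]

lemma aux_X_add_one_ne : (X + 1 : k[X]) ≠ 0 := by
  intro h
  have := congrArg (fun p => Polynomial.coeff p 1) h
  simp [Polynomial.coeff_one] at this

lemma aux_one_sub_X_ne : (1 - X : k[X]) ≠ 0 := by
  intro h
  have := congrArg (fun p => Polynomial.coeff p 1) h
  simp [Polynomial.coeff_one] at this

lemma aux_X_sub_one_ne : (X - 1 : k[X]) ≠ 0 := by
  intro h
  have := congrArg (fun p => Polynomial.coeff p 1) h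
  simp [Polynomial.coeff_one] at this

/-- Charpoly of the Cayley transform, up to a determinant factor. -/
lemma aux_charpoly_cayley (N : Matrix (Fin n) (Fin n) k) (hN : IsUnit (1 - N)) :
    ((1 - N)⁻¹ * (1 + N)).charpoly * C (1 - N).det
      = ∑ i ∈ Finset.range (n + 1), C (N.charpoly.coeff i) * (X - 1) ^ i * (X + 1) ^ (n - i) := by
  have hdet : IsUnit (1 - N).det := (Matrix.isUnit_iff_isUnit_det _).mp hN
  set B := (1 - N)⁻¹ * (1 + N) with hB
  have hcomm : (1 + N) * (1 - N) = (1 - N) * (1 + N) := by noncomm_ring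
  have hB1 : B * (1 - N) = 1 + N := by
    rw [hB, Matrix.mul_assoc, hcomm, ← Matrix.mul_assoc, Matrix.nonsing_inv_mul _ hdet,
      Matrix.one_mul]
  have hprod : charmatrix B * (1 - N).map C
      = (X - 1 : k[X]) • (1 : Matrix (Fin n) (Fin n) k[X]) - (X + 1 : k[X]) • N.map C := by
    rw [aux_charmatrix_eq, Matrix.sub_mul, smul_mul_assoc, Matrix.one_mul, ← Matrix.map_mul,
      hB1]
    refine Matrix.ext fun i j => ?_
    by_cases h : i = j <;>
      simp [h, Matrix.map_apply, Matrix.sub_apply, Matrix.add_apply, Matrix.smul_apply,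
        Matrix.one_apply, smul_eq_mul] <;> ring
  have hCd : C (1 - N).det = ((1 - N).map C).det := by
    rw [RingHom.map_det, RingHom.mapMatrix_apply]
  rw [Matrix.charpoly, hCd, ← Matrix.det_mul, hprod, aux_det_homog N _ _ aux_X_add_one_ne]

/-- Recovering the charpoly of `N` from that of its Cayley transform. -/
lemma aux_charpoly_inv_cayley (N : Matrix (Fin n) (Fin n) k) (hN : IsUnit (1 - N)) :
    N.charpoly * C (1 + (1 - N)⁻¹ * (1 + N)).det
      = ∑ i ∈ Finset.range (n + 1),
          C (((1 - N)⁻¹ * (1 + N)).charpoly.coeff i) * (X + 1) ^ i * (1 - X) ^ (n - i) := by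
  have hdet : IsUnit (1 - N).det := (Matrix.isUnit_iff_isUnit_det _).mp hN
  set B := (1 - N)⁻¹ * (1 + N) with hB
  have hcomm : (1 + N) * (1 - N) = (1 - N) * (1 + N) := by noncomm_ring
  have hB1 : B * (1 - N) = 1 + N := by
    rw [hB, Matrix.mul_assoc, hcomm, ← Matrix.mul_assoc, Matrix.nonsing_inv_mul _ hdet,
      Matrix.one_mul]
  have hcommN : N * (1 - N)⁻¹ = (1 - N)⁻¹ * N := by
    have h1 := Matrix.nonsing_inv_mul (1 - N) hdet
    have h2 := Matrix.mul_nonsing_inv (1 - N) hdet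
    have h3 : (1 - N) * N = N * (1 - N) := by noncomm_ring
    calc N * (1 - N)⁻¹ = ((1 - N)⁻¹ * (1 - N)) * (N * (1 - N)⁻¹) := by
          rw [h1, Matrix.one_mul]
      _ = (1 - N)⁻¹ * (((1 - N) * N) * (1 - N)⁻¹) := by
          simp only [Matrix.mul_assoc]
      _ = (1 - N)⁻¹ * (N * ((1 - N) * (1 - N)⁻¹)) := by rw [h3, Matrix.mul_assoc]
      _ = (1 - N)⁻¹ * N := by rw [h2, Matrix.mul_one]
  have hNB : N * B = B * N := by
    have h4 : N * (1 + N) = (1 + N) * N := by noncomm_ring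
    rw [hB, ← Matrix.mul_assoc, hcommN, Matrix.mul_assoc, h4, ← Matrix.mul_assoc]
  have hkey : N * (1 + B) = B - 1 := by
    have h5 : B - B * N = 1 + N := by
      rw [← hB1, Matrix.mul_sub, Matrix.mul_one]
    have h3 : B = 1 + N + B * N := by rw [← h5]; abel
    rw [Matrix.mul_add, Matrix.mul_one, hNB]
    nth_rewrite 2 [h3]
    abel
  have hprod : charmatrix N * (1 + B).map C
      = (X + 1 : k[X]) • (1 : Matrix (Fin n) (Fin n) k[X]) - (1 - X : k[X]) • B.map C := by
    rw [aux_charmatrix_eq, Matrix.sub_mul, smul_mul_assoc, Matrix.one_mul, ← Matrix.map_mul,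
      hkey]
    refine Matrix.ext fun i j => ?_
    by_cases h : i = j <;>
      simp [h, Matrix.map_apply, Matrix.sub_apply, Matrix.add_apply, Matrix.smul_apply,
        Matrix.one_apply, smul_eq_mul] <;> ring
  have hCd : C (1 + B).det = ((1 + B).map C).det := by
    rw [RingHom.map_det, RingHom.mapMatrix_apply]
  rw [Matrix.charpoly, hCd, ← Matrix.det_mul, hprod, aux_det_homog B _ _ aux_one_sub_X_ne]

lemma aux_det_one_add_cayley_ne (hchar : (2 : k) ≠ 0) (N : Matrix (Fin n) (Fin n) k)
    (hN : IsUnit (1 - N)) : (1 + (1 - N)⁻¹ * (1 + N)).det ≠ 0 := by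
  have hdet : IsUnit (1 - N).det := (Matrix.isUnit_iff_isUnit_det _).mp hN
  have h2 : (1 - N) * (1 + (1 - N)⁻¹ * (1 + N)) = (2 : k) • 1 := by
    rw [Matrix.mul_add, Matrix.mul_one, ← Matrix.mul_assoc, Matrix.mul_nonsing_inv _ hdet,
      Matrix.one_mul, two_smul]
    abel
  have h3 := congrArg Matrix.det h2
  rw [Matrix.det_mul, Matrix.det_smul, Matrix.det_one, Fintype.card_fin, mul_one] at h3
  intro h0
  rw [h0, mul_zero] at h3
  exact pow_ne_zero n hchar h3.symm

end Aux

theorem orbit_matching_charpoly_equiv (k : Type*) [Field k] (hchar : (2 : k) ≠ 0)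
    (n : ℕ) (hn : 1 ≤ n) (M N : Matrix (Fin n) (Fin n) k)
    (hM : IsUnit M) (hN : IsUnit (1 - N)) :
    ((2 : k) • M - 1).charpoly = ((1 - N)⁻¹ * (1 + N)).charpoly ↔
      (-(1 - M) * M⁻¹).charpoly = N.charpoly := by
  have hMdet : IsUnit M.det := (Matrix.isUnit_iff_isUnit_det M).mp hM
  set P := -(1 - M) * M⁻¹ with hPdef
  have hPval : (1 - M) * M⁻¹ = M⁻¹ - 1 := by
    rw [Matrix.sub_mul, Matrix.one_mul, Matrix.mul_nonsing_inv _ hMdet]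
  have h1P : 1 - P = M⁻¹ := by rw [hPdef, neg_mul, hPval]; abel
  have hPunit : IsUnit (1 - P) := h1P ▸ (Matrix.isUnit_nonsing_inv_iff.mpr hM)
  have hcay : (1 - P)⁻¹ * (1 + P) = (2 : k) • M - 1 := by
    rw [h1P, Matrix.nonsing_inv_nonsing_inv _ hMdet]
    have h1plusP : 1 + P = (2 : k) • (1 : Matrix (Fin n) (Fin n) k) - M⁻¹ := by
      rw [hPdef, neg_mul, hPval, two_smul]; abel
    rw [h1plusP, Matrix.mul_sub, mul_smul_comm, Matrix.mul_one,
      Matrix.mul_nonsing_inv _ hMdet]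
  rw [← hcay]
  have hPdetne : (1 - P).det ≠ 0 := by
    intro h0
    exact ((Matrix.isUnit_iff_isUnit_det _).mp hPunit).ne_zero (by rw [h0])
  have hNdetne : (1 - N).det ≠ 0 := by
    intro h0
    exact ((Matrix.isUnit_iff_isUnit_det _).mp hN).ne_zero (by rw [h0])
  constructor
  · intro h
    have hGP := aux_charpoly_inv_cayley P hPunit
    have hGN := aux_charpoly_inv_cayley N hN
    have hdetsAB : (1 + (1 - P)⁻¹ * (1 + P)).det = (1 + (1 - N)⁻¹ * (1 + N)).det := by
      have key : ∀ (A : Matrix (Fin n) (Fin n) k),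
          A.charpoly.eval (-1) = (-1 : k) ^ n * (1 + A).det := by
        intro A
        rw [aux_charpoly_eval]
        have : ((-1 : k) • (1 : Matrix (Fin n) (Fin n) k) - A) = -(1 + A) := by
          rw [neg_smul, one_smul]; abel
        rw [this, Matrix.det_neg, Fintype.card_fin]
      have e1 := key ((1 - P)⁻¹ * (1 + P))
      have e2 := key ((1 - N)⁻¹ * (1 + N))
      rw [h] at e1
      have := e1.symm.trans e2
      exact mul_left_cancel₀ (pow_ne_zero n (neg_ne_zero.mpr one_ne_zero)) this
    rw [h, hdetsAB] at hGP
    exact mul_right_cancel₀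
      (Polynomial.C_ne_zero.mpr (aux_det_one_add_cayley_ne hchar N hN))
      (hGP.trans hGN.symm)
  · intro h
    have hFP := aux_charpoly_cayley P hPunit
    have hFN := aux_charpoly_cayley N hN
    have hdets : (1 - P).det = (1 - N).det := by
      have e1 : P.charpoly.eval 1 = (1 - P).det := by rw [aux_charpoly_eval, one_smul]
      have e2 : N.charpoly.eval 1 = (1 - N).det := by rw [aux_charpoly_eval, one_smul]
      rw [← e1, ← e2, h]
    rw [h, hdets] at hFP
    exact mul_right_cancel₀ (Polynomial.C_ne_zero.mpr hNdetne) (hFP.trans hFN.symm)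
end

section
/- Let R be a commutative ring with a ring automorphism x ↦ x̄ of order two, ε ∈ R with ε̄ = ε, and β ∈ Mₙ(R) with entrywise conjugate β̄. Assume 1 − εββ̄ is invertible in Mₙ(R). Then the block matrix g = [[1, εβ],[β̄, 1]] ∈ M₂ₙ(R) is invertible, and the upper-left n × n block of g · θ(g)⁻¹ equals (1 − εββ̄)⁻¹(1 + εββ̄), where θ(g) = diag(1, −1) · g · diag(1, −1) = [[1, −εβ],[−β̄, 1]]. -/
private lemma isUnit_one_sub_swap {A : Type*} [Ring A] (x y : A)
    (h : IsUnit (1 - x * y)) : IsUnit (1 - y * x) := by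
  refine ⟨⟨1 - y * x, 1 + y * h.unit.inv * x, ?_, ?_⟩, rfl⟩
  · calc
      (1 - y * x) * (1 + y * (IsUnit.unit h).inv * x) =
          1 - y * x + y * ((1 - x * y) * h.unit.inv) * x := by noncomm_ring
      _ = 1 := by simp [h.unit.mul_inv]
  · calc
      (1 + y * (IsUnit.unit h).inv * x) * (1 - y * x) =
          1 - y * x + y * (h.unit.inv * (1 - x * y)) * x := by noncomm_ring
      _ = 1 := by simp [h.unit.inv_mul]

theorem matching_invariant_block (R : Type*) [CommRing R] (conj : R ≃+* R)
    (hconj : ∀ x, conj (conj x) = x) (ε : R) (hε : conj ε = ε)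
    (n : ℕ) (β : Matrix (Fin n) (Fin n) R)
    (h : IsUnit (1 - ε • (β * β.map conj))) :
    IsUnit (Matrix.fromBlocks 1 (ε • β) (β.map conj) 1) ∧
      Matrix.toBlocks₁₁
          (Matrix.fromBlocks 1 (ε • β) (β.map conj) 1 *
            (Matrix.fromBlocks 1 (-(ε • β)) (-(β.map conj)) 1)⁻¹) =
        (1 - ε • (β * β.map conj))⁻¹ * (1 + ε • (β * β.map conj)) := by
  set B : Matrix (Fin n) (Fin n) R := ε • β with hB
  set C : Matrix (Fin n) (Fin n) R := β.map conj with hC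
  have hX : ε • (β * C) = B * C := by rw [hB, Matrix.smul_mul]
  rw [hX] at h ⊢
  set A : Matrix (Fin n) (Fin n) R := 1 - B * C with hA
  have h' : IsUnit (1 - C * B) := isUnit_one_sub_swap _ _ h
  set A' : Matrix (Fin n) (Fin n) R := 1 - C * B with hA'
  have hAd : IsUnit A.det := (Matrix.isUnit_iff_isUnit_det _).mp h
  have hA'd : IsUnit A'.det := (Matrix.isUnit_iff_isUnit_det _).mp h'
  have hAinv : A * A⁻¹ = 1 := Matrix.mul_nonsing_inv _ hAd
  have hAinv' : A⁻¹ * A = 1 := Matrix.nonsing_inv_mul _ hAd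
  have hA'inv : A' * A'⁻¹ = 1 := Matrix.mul_nonsing_inv _ hA'd
  set M : Matrix (Fin n ⊕ Fin n) (Fin n ⊕ Fin n) R :=
    Matrix.fromBlocks A⁻¹ (B * A'⁻¹) (C * A⁻¹) A'⁻¹ with hM
  have hθ : Matrix.fromBlocks 1 (-B) (-C) (1 : Matrix (Fin n) (Fin n) R) * M = 1 := by
    have e11 : 1 * A⁻¹ + -B * (C * A⁻¹) = (1 : Matrix (Fin n) (Fin n) R) := by
      calc 1 * A⁻¹ + -B * (C * A⁻¹) = (1 - B * C) * A⁻¹ := by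
            rw [Matrix.sub_mul, Matrix.neg_mul, Matrix.mul_assoc, ← sub_eq_add_neg]
        _ = 1 := hAinv
    have e12 : 1 * (B * A'⁻¹) + -B * A'⁻¹ = (0 : Matrix (Fin n) (Fin n) R) := by
      rw [Matrix.one_mul, Matrix.neg_mul, add_neg_cancel]
    have e21 : -C * A⁻¹ + 1 * (C * A⁻¹) = (0 : Matrix (Fin n) (Fin n) R) := by
      rw [Matrix.one_mul, Matrix.neg_mul, neg_add_cancel]
    have e22 : -C * (B * A'⁻¹) + 1 * A'⁻¹ = (1 : Matrix (Fin n) (Fin n) R) := by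
      calc -C * (B * A'⁻¹) + 1 * A'⁻¹ = (1 - C * B) * A'⁻¹ := by
            rw [Matrix.sub_mul, Matrix.neg_mul, Matrix.mul_assoc, neg_add_eq_sub]
        _ = 1 := hA'inv
    rw [hM, Matrix.fromBlocks_multiply, e11, e12, e21, e22, Matrix.fromBlocks_one]
  have hθinv : (Matrix.fromBlocks 1 (-B) (-C) (1 : Matrix (Fin n) (Fin n) R))⁻¹ = M :=
    Matrix.inv_eq_right_inv hθ
  constructor
  · -- g is invertible since g * θ(g) = diag(A, A') has unit determinant
    have hgθ : Matrix.fromBlocks 1 B C (1 : Matrix (Fin n) (Fin n) R) *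
        Matrix.fromBlocks 1 (-B) (-C) 1 = Matrix.fromBlocks A 0 0 A' := by
      rw [Matrix.fromBlocks_multiply]
      congr 1 <;>
        simp [hA, hA', sub_eq_add_neg, Matrix.mul_neg, add_comm]
    rw [Matrix.isUnit_iff_isUnit_det]
    have hd := congrArg Matrix.det hgθ
    rw [Matrix.det_mul, Matrix.det_fromBlocks_zero₁₂] at hd
    exact isUnit_of_mul_isUnit_left (hd ▸ hAd.mul hA'd)
  · rw [show -(ε • β) = -B from by rw [hB], show -(β.map conj) = -C from by rw [hC], hθinv, hM,
      Matrix.fromBlocks_multiply, Matrix.toBlocks_fromBlocks₁₁]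
    have key : A * (1 + B * C) = (1 + B * C) * A := by
      rw [hA]; noncomm_ring
    have hcomm : (1 + B * C) * A⁻¹ = A⁻¹ * (1 + B * C) :=
      calc (1 + B * C) * A⁻¹ = 1 * ((1 + B * C) * A⁻¹) := (Matrix.one_mul _).symm
        _ = A⁻¹ * A * ((1 + B * C) * A⁻¹) := by rw [hAinv']
        _ = A⁻¹ * (A * (1 + B * C) * A⁻¹) := by
            rw [Matrix.mul_assoc, Matrix.mul_assoc]
        _ = A⁻¹ * ((1 + B * C) * A * A⁻¹) := by rw [key]
        _ = A⁻¹ * (1 + B * C) := by rw [Matrix.mul_assoc, hAinv, Matrix.mul_one]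
    calc 1 * A⁻¹ + B * (C * A⁻¹) = (1 + B * C) * A⁻¹ := by
          rw [Matrix.add_mul, Matrix.mul_assoc]
      _ = A⁻¹ * (1 + B * C) := hcomm
end
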